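/- arXiv:1511.00106 — 2 statements merged into one kernel-verified Lean document; each statement's English description precedes it below -/
import Mathlib

section
/- Assume the balance condition α + γ > 1 and set δ = 1 − 1/α + γ/α > 0. For every T > 0 there exists C > 0 such that for every x ∈ ℝ^d, every solution υ_·(x) ∈ Υ(x) of the Cauchy problem dυ_t/dt = b(υ_t), υ_0 = x, and all 0 ≤ s ≤ t ≤ T, one has |υ_t(x) − υ_t^s(x)| ≤ C t^{1 + γ/α} = C t^{1/α + δ}, where υ_t^s(x) is the unique solution of dυ_t/dt = b(|t−s|, υ_t), υ_0 = x. The constant C is uniform in x, s and in the choice of the solution υ_·(x) ∈ Υ(x). -/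
open MeasureTheory Real Set

/-- `Euc d` is the Euclidean space `ℝ^d`. -/
abbrev Euc (d : ℕ) := EuclideanSpace ℝ (Fin d)

/-- The Gaussian mollification `b(t,x)` of the drift `b` at scale `t^{1/α}`:
`b(t,x) = (2π)^{-d/2} t^{-d/α} ∫ b(z) exp(-|z-x|²/(2 t^{2/α})) dz` for `t > 0`
(with the natural boundary value `b(x)` for `t ≤ 0`). -/
noncomputable def moll (d : ℕ) (α : ℝ) (b : Euc d → Euc d) (t : ℝ) (x : Euc d) : Euc d :=
  if t ≤ 0 then b x
  else ((2 * Real.pi) ^ (-(d : ℝ) / 2) * t ^ (-(d : ℝ) / α)) •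
    ∫ z : Euc d, Real.exp (-‖z - x‖ ^ 2 / (2 * t ^ (2 / α))) • b z

/-- `IsSol F x0 f` : `f` solves the Cauchy problem `f' (t) = F t (f t)` on `[0,∞)`, `f 0 = x0`. -/
def IsSol (d : ℕ) (F : ℝ → Euc d → Euc d) (x0 : Euc d) (f : ℝ → Euc d) : Prop :=
  f 0 = x0 ∧ ∀ t : ℝ, 0 ≤ t → HasDerivWithinAt f (F t (f t)) (Set.Ici 0) t


/-! At time lag `r` the mollified drift is `O(r^{γ/α})`-close to `b`: subtract `b x` under the
unit-mass Gaussian kernel of width `q = r^{1/α}` and absorb the Hölder factor `‖z - x‖^γ` into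
half of the Gaussian decay, at the price `q^γ`. On `[0, t]` the lag `|τ - s|` is at most `t`, so
the difference `D` of the two solutions satisfies `‖D'‖ ≤ C₀ ‖D‖^γ + K t^{γ/α}`. Linearising
`a^γ ≤ q^γ + q^{γ-1} a` at `q = t^{1+γ/α}` and applying Gronwall gives
`‖D t‖ ≤ (K + C₀ t^θ) e^{C₀ t^θ} t^{1+γ/α}` with `θ = γ (α + γ - 1) / α`, which is positive by the
balance condition, so `t^θ ≤ T^θ`. -/

lemma rpow_le_rpow_add_rpow_sub_one_mul {a q γ : ℝ} (hγ0 : 0 < γ) (hγ1 : γ ≤ 1) (hq : 0 < q)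
    (ha : 0 ≤ a) : a ^ γ ≤ q ^ γ + q ^ (γ - 1) * a := by
  rcases le_total a q with haq | hqa
  · have : 0 ≤ q ^ (γ - 1) * a := by positivity
    linarith [rpow_le_rpow ha haq hγ0.le]
  · have ha0 : 0 < a := hq.trans_le hqa
    calc a ^ γ = a ^ (γ - 1) * a := by rw [← rpow_add_one ha0.ne', sub_add_cancel]
      _ ≤ q ^ (γ - 1) * a :=
        mul_le_mul_of_nonneg_right (rpow_le_rpow_of_nonpos hq hqa (by linarith)) ha
      _ ≤ q ^ γ + q ^ (γ - 1) * a := le_add_of_nonneg_left (by positivity)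

lemma exp_neg_sq_div_mul_rpow_le {γ q y : ℝ} (hγ0 : 0 < γ) (hγ1 : γ ≤ 1) (hq : 0 < q)
    (hy : 0 ≤ y) :
    rexp (-y ^ 2 / (2 * q ^ 2)) * y ^ γ ≤ 2 * q ^ γ * rexp (-y ^ 2 / (4 * q ^ 2)) := by
  set u := y ^ 2 / (4 * q ^ 2)
  -- `y / q ≤ 1 + (y/q)²/4 ≤ exp ((y/q)²/4)`: the half of the Gaussian decay given up absorbs `y^γ`
  have hyq : y / q ≤ rexp u := by
    have : (y / q) ^ 2 / 4 = u := by rw [div_pow]; ring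
    nlinarith [add_one_le_exp u, sq_nonneg (y / q - 2)]
  have hrpow : y ^ γ ≤ 2 * q ^ γ * rexp u := by
    have hsplit : q ^ (γ - 1) * y = q ^ γ * (y / q) := by
      rw [rpow_sub_one hq.ne']; ring
    have hqγ := (rpow_pos_of_pos hq γ).le
    have := rpow_le_rpow_add_rpow_sub_one_mul hγ0 hγ1 hq hy
    nlinarith [mul_le_mul_of_nonneg_left hyq hqγ,
      mul_le_mul_of_nonneg_left (one_le_exp (by positivity : 0 ≤ u)) hqγ]
  calc rexp (-y ^ 2 / (2 * q ^ 2)) * y ^ γ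
      ≤ rexp (-y ^ 2 / (2 * q ^ 2)) * (2 * q ^ γ * rexp u) := by gcongr
    _ = 2 * q ^ γ * rexp (-y ^ 2 / (2 * q ^ 2) + u) := by rw [exp_add]; ring
    _ = 2 * q ^ γ * rexp (-y ^ 2 / (4 * q ^ 2)) := by congr 2; simp only [u]; field_simp; ring

lemma exp_sub_one_le_mul_exp (y : ℝ) : rexp y - 1 ≤ y * rexp y := by
  have h := mul_le_mul_of_nonneg_right (one_sub_le_exp_neg y) (exp_pos y).le
  rw [← exp_add, neg_add_cancel, exp_zero] at h
  linarith

lemma gronwallBound_zero_le_mul_exp {K ε x : ℝ} (hK : 0 ≤ K) (hε : 0 ≤ ε) :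
    gronwallBound 0 K ε x ≤ ε * x * rexp (K * x) := by
  rcases hK.eq_or_lt with rfl | hK
  · simp [gronwallBound_K0]
  · rw [gronwallBound_of_K_ne_0 hK.ne']
    dsimp only
    rw [zero_mul, zero_add, div_mul_eq_mul_div, div_le_iff₀ hK]
    nlinarith [mul_le_mul_of_nonneg_left (exp_sub_one_le_mul_exp (K * x)) hε]

lemma continuous_of_norm_sub_le_mul_rpow {X Y : Type*} [SeminormedAddCommGroup X]
    [SeminormedAddCommGroup Y] {f : X → Y} {C γ : ℝ} (hγ : 0 < γ)
    (hf : ∀ x y, ‖f x - f y‖ ≤ C * ‖x - y‖ ^ γ) : Continuous f := by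
  refine continuous_iff_continuousAt.2 fun x => tendsto_iff_norm_sub_tendsto_zero.2 ?_
  refine squeeze_zero (fun _ => norm_nonneg _) (fun z => hf z x) ?_
  simpa [zero_rpow hγ.ne'] using
    ((continuousAt_rpow_const 0 γ (Or.inr hγ.le)).tendsto.comp
      (tendsto_norm_sub_self x)).const_mul C

section GaussianKernel

variable {V : Type*} [NormedAddCommGroup V] [InnerProductSpace ℝ V] [FiniteDimensional ℝ V]
  [MeasurableSpace V] [BorelSpace V]

lemma integrable_exp_neg_norm_sub_sq_div {c : ℝ} (hc : 0 < c) (x : V) :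
    Integrable (fun z : V => rexp (-‖z - x‖ ^ 2 / c)) := by
  have h := (GaussianFourier.integrable_cexp_neg_mul_sq_norm_add
      (V := V) (b := ((1 / c : ℝ) : ℂ)) (by simpa using hc) 0 0).norm.comp_sub_right x
  refine h.congr (Filter.Eventually.of_forall fun z => ?_)
  simp only [Complex.norm_exp, zero_mul, add_zero, ← Complex.ofReal_pow, ← Complex.ofReal_neg,
    ← Complex.ofReal_mul, Complex.ofReal_re]
  ring_nf

lemma integral_exp_neg_norm_sub_sq_div {c : ℝ} (hc : 0 < c) (x : V) :
    ∫ z : V, rexp (-‖z - x‖ ^ 2 / c) = (π * c) ^ ((Module.finrank ℝ V : ℝ) / 2) := by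
  have h := GaussianFourier.integral_rexp_neg_mul_sq_norm (V := V) (one_div_pos.2 hc)
  rw [show π / (1 / c) = π * c by field_simp] at h
  rw [integral_sub_right_eq_self (fun z : V => rexp (-‖z‖ ^ 2 / c)) x, ← h]
  congr with z
  ring_nf

end GaussianKernel

section GaussianSmoothing

variable {V : Type*} [NormedAddCommGroup V] [InnerProductSpace ℝ V] [FiniteDimensional ℝ V]
  [MeasurableSpace V] [BorelSpace V] {W : Type*} [NormedAddCommGroup W] [NormedSpace ℝ W]
  [CompleteSpace W]

noncomputable def gaussianSmoothing (q : ℝ) (f : V → W) (x : V) : W :=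
  (2 * π * q ^ 2) ^ (-(Module.finrank ℝ V : ℝ) / 2) •
    ∫ z, rexp (-‖z - x‖ ^ 2 / (2 * q ^ 2)) • f z

lemma norm_gaussianSmoothing_sub_le {f : V → W} {C M γ q : ℝ} (hγ0 : 0 < γ) (hγ1 : γ ≤ 1)
    (hC : 0 ≤ C) (hq : 0 < q) (hf_bdd : ∀ x, ‖f x‖ ≤ M)
    (hf_hol : ∀ x y, ‖f x - f y‖ ≤ C * ‖x - y‖ ^ γ) (x : V) :
    ‖gaussianSmoothing q f x - f x‖ ≤ 2 ^ ((Module.finrank ℝ V : ℝ) / 2 + 1) * C * q ^ γ := by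
  set n : ℝ := (Module.finrank ℝ V : ℝ)
  have hunit : (2 * π * q ^ 2) ^ (-n / 2) * (2 * π * q ^ 2) ^ (n / 2) = 1 := by
    rw [← rpow_add (by positivity), neg_div, neg_add_cancel, rpow_zero]
  set c : ℝ := (2 * π * q ^ 2) ^ (-n / 2)
  set k : V → ℝ := fun z => rexp (-‖z - x‖ ^ 2 / (2 * q ^ 2))
  have hk : Integrable k := integrable_exp_neg_norm_sub_sq_div (by positivity) x
  have hmass : c * ∫ z, k z = 1 := by
    rw [integral_exp_neg_norm_sub_sq_div (by positivity),
      show π * (2 * q ^ 2) = 2 * π * q ^ 2 by ring]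
    exact hunit
  have hkf : Integrable fun z => k z • f z := by
    refine (hk.const_mul M).mono' ((hk.aestronglyMeasurable).smul
      (continuous_of_norm_sub_le_mul_rpow hγ0 hf_hol).aestronglyMeasurable)
      (.of_forall fun z => ?_)
    rw [norm_smul, norm_of_nonneg (exp_pos _).le, mul_comm M]
    exact mul_le_mul_of_nonneg_left (hf_bdd z) (exp_pos _).le
  -- subtracting `f x` costs nothing because the kernel has unit mass
  have hdiff : gaussianSmoothing q f x - f x = c • ∫ z, k z • (f z - f x) := by
    simp only [smul_sub]
    rw [integral_sub hkf (hk.smul_const _), integral_smul_const, smul_sub, smul_smul, hmass,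
      one_smul]
    rfl
  have hpt : ∀ z, ‖k z • (f z - f x)‖ ≤ 2 * C * q ^ γ * rexp (-‖z - x‖ ^ 2 / (4 * q ^ 2)) := by
    intro z
    rw [norm_smul, norm_of_nonneg (exp_pos _).le]
    calc k z * ‖f z - f x‖ ≤ k z * (C * ‖z - x‖ ^ γ) := by gcongr; exact hf_hol z x
      _ = C * (k z * ‖z - x‖ ^ γ) := by ring
      _ ≤ C * (2 * q ^ γ * rexp (-‖z - x‖ ^ 2 / (4 * q ^ 2))) :=
        mul_le_mul_of_nonneg_left (exp_neg_sq_div_mul_rpow_le hγ0 hγ1 hq (norm_nonneg _)) hC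
      _ = _ := by ring
  have hc : 0 < c := by positivity
  rw [hdiff, norm_smul, norm_of_nonneg hc.le]
  calc c * ‖∫ z, k z • (f z - f x)‖
      ≤ c * ∫ z, 2 * C * q ^ γ * rexp (-‖z - x‖ ^ 2 / (4 * q ^ 2)) := by
        gcongr
        exact norm_integral_le_of_norm_le
          ((integrable_exp_neg_norm_sub_sq_div (by positivity) x).const_mul _) (.of_forall hpt)
    _ = 2 * C * q ^ γ * (c * (π * (4 * q ^ 2)) ^ (n / 2)) := by
        rw [integral_const_mul, integral_exp_neg_norm_sub_sq_div (by positivity)]; ring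
    _ = 2 ^ (n / 2 + 1) * C * q ^ γ := by
        rw [show π * (4 * q ^ 2) = 2 * (2 * π * q ^ 2) by ring, mul_rpow (by norm_num)
          (by positivity), rpow_add_one two_ne_zero]
        linear_combination (2 * C * q ^ γ * 2 ^ (n / 2)) * hunit

end GaussianSmoothing

lemma moll_eq_gaussianSmoothing {d : ℕ} {α r : ℝ} (b : Euc d → Euc d) (hr : 0 < r) (x : Euc d) :
    moll d α b r x = gaussianSmoothing (r ^ (1 / α)) b x := by
  have hsq : (r ^ (1 / α)) ^ 2 = r ^ (2 / α) := by
    rw [← rpow_natCast, ← rpow_mul hr.le]; ring_nf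
  rw [moll, if_neg hr.not_ge, gaussianSmoothing, finrank_euclideanSpace_fin, hsq]
  congr 1
  rw [mul_rpow (by positivity : (0 : ℝ) ≤ 2 * π) (by positivity : 0 ≤ r ^ (2 / α)),
    ← rpow_mul hr.le]
  ring_nf

lemma norm_moll_sub_le {d : ℕ} {α γ C M r : ℝ} {b : Euc d → Euc d} (hγ0 : 0 < γ) (hγ1 : γ ≤ 1)
    (hC : 0 ≤ C) (hb_bdd : ∀ x, ‖b x‖ ≤ M) (hb_hol : ∀ x y, ‖b x - b y‖ ≤ C * ‖x - y‖ ^ γ)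
    (hr : 0 ≤ r) (x : Euc d) :
    ‖moll d α b r x - b x‖ ≤ 2 ^ ((d : ℝ) / 2 + 1) * C * r ^ (γ / α) := by
  rcases hr.eq_or_lt with rfl | hr
  · simp only [moll, le_refl, if_true, sub_self, norm_zero]
    positivity
  · have h := norm_gaussianSmoothing_sub_le hγ0 hγ1 hC (rpow_pos_of_pos hr (1 / α)) hb_bdd hb_hol x
    rwa [← moll_eq_gaussianSmoothing b hr, finrank_euclideanSpace_fin, ← rpow_mul hr.le,
      one_div_mul_eq_div] at h

lemma norm_sub_le_of_isSol_of_holder {d : ℕ} {F : Euc d → Euc d} {G : ℝ → Euc d → Euc d}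
    {x : Euc d} {f g : ℝ → Euc d} {C γ η q t : ℝ} (hγ0 : 0 < γ) (hγ1 : γ ≤ 1) (hC : 0 ≤ C)
    (hη : 0 ≤ η) (hq : 0 < q) (ht : 0 ≤ t) (hF : ∀ y z, ‖F y - F z‖ ≤ C * ‖y - z‖ ^ γ)
    (hFG : ∀ τ ∈ Ico 0 t, ∀ y, ‖F y - G τ y‖ ≤ η)
    (hf : IsSol d (fun _ => F) x f) (hg : IsSol d G x g) :
    ‖f t - g t‖ ≤ (η + C * q ^ γ) * t * rexp (C * q ^ (γ - 1) * t) := by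
  have hderiv : ∀ τ ∈ Ico 0 t,
      HasDerivWithinAt (fun τ => f τ - g τ) (F (f τ) - G τ (g τ)) (Ici τ) τ :=
    fun τ hτ => ((hf.2 τ hτ.1).sub (hg.2 τ hτ.1)).mono (Ici_subset_Ici.2 hτ.1)
  have hcont : ContinuousOn (fun τ => f τ - g τ) (Icc 0 t) := fun τ hτ =>
    ((hf.2 τ hτ.1).sub (hg.2 τ hτ.1)).continuousWithinAt.mono Icc_subset_Ici_self
  -- linearising the Hölder modulus at scale `q` puts the estimate in Gronwall form
  have hbound : ∀ τ ∈ Ico 0 t, ‖F (f τ) - G τ (g τ)‖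
      ≤ C * q ^ (γ - 1) * ‖f τ - g τ‖ + (η + C * q ^ γ) := by
    intro τ hτ
    have hlin := rpow_le_rpow_add_rpow_sub_one_mul hγ0 hγ1 hq (norm_nonneg (f τ - g τ))
    calc ‖F (f τ) - G τ (g τ)‖ ≤ ‖F (f τ) - F (g τ)‖ + ‖F (g τ) - G τ (g τ)‖ :=
          norm_sub_le_norm_sub_add_norm_sub _ _ _
      _ ≤ C * ‖f τ - g τ‖ ^ γ + η := add_le_add (hF _ _) (hFG τ hτ _)
      _ ≤ C * (q ^ γ + q ^ (γ - 1) * ‖f τ - g τ‖) + η := by gcongr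
      _ = _ := by ring
  have h0 : ‖f 0 - g 0‖ ≤ 0 := by simp [hf.1, hg.1]
  calc ‖f t - g t‖ ≤ gronwallBound 0 (C * q ^ (γ - 1)) (η + C * q ^ γ) (t - 0) :=
        norm_le_gronwallBound_of_norm_deriv_right_le hcont hderiv h0 hbound t (right_mem_Icc.2 ht)
    _ ≤ _ := by rw [sub_zero]; exact gronwallBound_zero_le_mul_exp (by positivity) (by positivity)

lemma norm_sub_le_of_isSol_of_holder_of_rpow {d : ℕ} {F : Euc d → Euc d}
    {G : ℝ → Euc d → Euc d} {x : Euc d} {f g : ℝ → Euc d} {C K α γ t : ℝ} (hα : α ≠ 0)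
    (hγ0 : 0 < γ) (hγ1 : γ ≤ 1) (hC : 0 ≤ C) (hK : 0 ≤ K) (ht : 0 < t)
    (hF : ∀ y z, ‖F y - F z‖ ≤ C * ‖y - z‖ ^ γ)
    (hFG : ∀ τ ∈ Ico 0 t, ∀ y, ‖F y - G τ y‖ ≤ K * t ^ (γ / α))
    (hf : IsSol d (fun _ => F) x f) (hg : IsSol d G x g) :
    ‖f t - g t‖ ≤ (K + C * t ^ (γ * (α + γ - 1) / α)) * rexp (C * t ^ (γ * (α + γ - 1) / α)) *
      t ^ (1 + γ / α) := by
  set θ : ℝ := γ * (α + γ - 1) / α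
  have hcmp := norm_sub_le_of_isSol_of_holder hγ0 hγ1 hC (by positivity)
    (rpow_pos_of_pos ht (1 + γ / α)) ht.le hF hFG hf hg
  have e1 : t ^ (γ / α) * t = t ^ (1 + γ / α) := by rw [← rpow_add_one ht.ne', add_comm]
  have e2 : (t ^ (1 + γ / α)) ^ γ * t = t ^ θ * t ^ (1 + γ / α) := by
    rw [← rpow_mul ht.le, ← rpow_add_one ht.ne', ← rpow_add ht]
    congr 1
    simp only [θ]
    field_simp
    ring
  have hrate : C * (t ^ (1 + γ / α)) ^ (γ - 1) * t = C * t ^ θ := by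
    rw [mul_assoc, ← rpow_mul ht.le, ← rpow_add_one ht.ne']
    congr 2
    simp only [θ]
    field_simp
    ring
  rw [hrate] at hcmp
  refine hcmp.trans_eq ?_
  linear_combination rexp (C * t ^ θ) * (K * e1 + C * e2)

theorem approximate_flow_error_bound_general
    (d : ℕ) (α γ C₀ : ℝ)
    (hα : α ∈ Set.Ioo (0 : ℝ) 2) (hγ : γ ∈ Set.Ioc (0 : ℝ) 1) (hC₀ : 0 < C₀)
    (b : Euc d → Euc d)
    (hb_bdd : ∀ x, ‖b x‖ ≤ C₀)
    (hb_hol : ∀ x y, ‖b x - b y‖ ≤ C₀ * ‖x - y‖ ^ γ)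
    (hbal : 1 < α + γ)
    (δ : ℝ) (hδ : δ = 1 - 1 / α + γ / α) :
    ∀ T > (0 : ℝ), ∃ C > (0 : ℝ), ∀ x : Euc d,
      ∀ υ : ℝ → Euc d, IsSol d (fun _ z => b z) x υ →
      ∀ s t : ℝ, 0 ≤ s → s ≤ t → t ≤ T →
      ∀ υs : ℝ → Euc d, IsSol d (fun τ z => moll d α b |τ - s| z) x υs →
      ‖υ t - υs t‖ ≤ C * t ^ (1 / α + δ) := by
  obtain ⟨hα0, -⟩ := hα
  obtain ⟨hγ0, hγ1⟩ := hγ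
  intro T hT
  set K : ℝ := 2 ^ ((d : ℝ) / 2 + 1) * C₀
  set θ : ℝ := γ * (α + γ - 1) / α
  have hθ : 0 < θ := div_pos (mul_pos hγ0 (by linarith)) hα0
  refine ⟨(K + C₀ * T ^ θ) * rexp (C₀ * T ^ θ), by positivity, ?_⟩
  intro x υ hυ s t hs hst htT υs hυs
  rw [show 1 / α + δ = 1 + γ / α by rw [hδ]; ring]
  rcases (hs.trans hst).eq_or_lt with rfl | ht
  · rw [hυ.1, hυs.1, sub_self, norm_zero]
    positivity
  have hmoll : ∀ τ ∈ Ico 0 t, ∀ y, ‖b y - moll d α b |τ - s| y‖ ≤ K * t ^ (γ / α) := by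
    intro τ hτ y
    rw [norm_sub_rev]
    refine (norm_moll_sub_le hγ0 hγ1 hC₀.le hb_bdd hb_hol (abs_nonneg _) y).trans ?_
    gcongr
    exact abs_le.2 ⟨by linarith [hτ.1], by linarith [hτ.2]⟩
  calc ‖υ t - υs t‖ ≤ (K + C₀ * t ^ θ) * rexp (C₀ * t ^ θ) * t ^ (1 + γ / α) :=
        norm_sub_le_of_isSol_of_holder_of_rpow hα0.ne' hγ0 hγ1 hC₀.le (by positivity) ht hb_hol
          hmoll hυ hυs
    _ ≤ (K + C₀ * T ^ θ) * rexp (C₀ * T ^ θ) * t ^ (1 + γ / α) := by gcongr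

theorem approximate_flow_error_bound
    (d : ℕ) (hd : 1 ≤ d) (α γ C₀ : ℝ)
    (hα : α ∈ Set.Ioo (0 : ℝ) 2) (hγ : γ ∈ Set.Ioc (0 : ℝ) 1) (hC₀ : 0 < C₀)
    (b : Euc d → Euc d)
    (hb_bdd : ∀ x, ‖b x‖ ≤ C₀)
    (hb_hol : ∀ x y, ‖b x - b y‖ ≤ C₀ * ‖x - y‖ ^ γ)
    (hbal : 1 < α + γ)
    (δ : ℝ) (hδ : δ = 1 - 1 / α + γ / α) :
    ∀ T > (0 : ℝ), ∃ C > (0 : ℝ), ∀ x : Euc d,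
      ∀ υ : ℝ → Euc d, IsSol d (fun _ z => b z) x υ →
      ∀ s t : ℝ, 0 ≤ s → s ≤ t → t ≤ T →
      ∀ υs : ℝ → Euc d, IsSol d (fun τ z => moll d α b |τ - s| z) x υs →
      ‖υ t - υs t‖ ≤ C * t ^ (1 / α + δ) :=
  approximate_flow_error_bound_general d α γ C₀ hα hγ hC₀ b hb_bdd hb_hol hbal δ hδ
end

section
/- Let g : ℝ^d → (0,∞) be continuously differentiable and rotationally invariant (g(x) depends only on |x|), and suppose there exists C₀ > 0 such that |∇g(x)| ≤ C₀ g(x)/(1 + |x|) for all x ∈ ℝ^d. Then for every V > 0 there exists a constant C_V > 0 such that for every v ∈ [0,V] and all x, y ∈ ℝ^d satisfying e^{−v}|x| − v ≤ |y| ≤ e^{v}|x| + v, one has e^{−C_V v} g(x) ≤ g(y) ≤ e^{C_V v} g(x). -/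
open Real Set

/-!
Along a ray `r ↦ r • e` the logarithmic gradient bound says that `log g` is `C₀`-Lipschitz as a
function of `log (1 + r)`: after the substitution `r = exp t - 1` the derivative of `t ↦ log g`
is bounded by `C₀`. By rotation invariance `g x` and `g y` are values of `g` on one ray, and the
hypothesis on `‖y‖` makes `log (1 + ‖y‖)` and `log (1 + ‖x‖)` differ by at most `2 v`.
-/

section Ray

variable {E : Type*} [NormedAddCommGroup E] [NormedSpace ℝ E] {g : E → ℝ} {C₀ : ℝ} {e : E}

lemma hasDerivAt_log_comp_exp_sub_one_smul (hg : Differentiable ℝ g) (hpos : ∀ x, 0 < g x)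
    (t : ℝ) :
    HasDerivAt (fun s => log (g ((exp s - 1) • e)))
      (fderiv ℝ g ((exp t - 1) • e) (exp t • e) / g ((exp t - 1) • e)) t := by
  have hray : HasDerivAt (fun s => (exp s - 1) • e) (exp t • e) t :=
    ((hasDerivAt_exp t).sub_const 1).smul_const e
  exact ((hg _).hasFDerivAt.comp_hasDerivAt t hray).log (hpos _).ne'

lemma norm_fderiv_exp_sub_one_smul_div_le (hpos : ∀ x, 0 < g x)
    (hbound : ∀ x, ‖fderiv ℝ g x‖ ≤ C₀ * g x / (1 + ‖x‖)) (he : ‖e‖ = 1) {t : ℝ} (ht : 0 ≤ t) :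
    ‖fderiv ℝ g ((exp t - 1) • e) (exp t • e) / g ((exp t - 1) • e)‖ ≤ C₀ := by
  set x := (exp t - 1) • e
  have hx : 1 + ‖x‖ = exp t := by
    rw [norm_smul, he, mul_one, norm_of_nonneg (sub_nonneg.2 (one_le_exp ht))]
    ring
  rw [norm_div, norm_of_nonneg (hpos x).le, div_le_iff₀ (hpos x)]
  calc ‖fderiv ℝ g x (exp t • e)‖ ≤ ‖fderiv ℝ g x‖ * ‖exp t • e‖ := (fderiv ℝ g x).le_opNorm _
    _ ≤ C₀ * g x / exp t * exp t := by
      rw [norm_smul, he, mul_one, norm_of_nonneg (exp_pos t).le, ← hx]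
      gcongr
      exact hbound x
    _ = C₀ * g x := div_mul_cancel₀ _ (exp_pos t).ne'

lemma abs_log_apply_smul_sub_le (hg : Differentiable ℝ g) (hpos : ∀ x, 0 < g x)
    (hbound : ∀ x, ‖fderiv ℝ g x‖ ≤ C₀ * g x / (1 + ‖x‖)) (he : ‖e‖ = 1) {r s : ℝ}
    (hr : 0 ≤ r) (hs : 0 ≤ s) :
    |log (g (s • e)) - log (g (r • e))| ≤ C₀ * |log (1 + s) - log (1 + r)| := by
  have hlip := (convex_Ici (0 : ℝ)).norm_image_sub_le_of_norm_hasDerivWithin_le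
    (fun t _ => (hasDerivAt_log_comp_exp_sub_one_smul hg hpos t).hasDerivWithinAt)
    (fun t ht => norm_fderiv_exp_sub_one_smul_div_le hpos hbound he ht)
    (log_nonneg (by linarith : (1 : ℝ) ≤ 1 + r)) (log_nonneg (by linarith : (1 : ℝ) ≤ 1 + s))
  simpa only [exp_log (by linarith : 0 < 1 + r), exp_log (by linarith : 0 < 1 + s),
    add_sub_cancel_left, norm_eq_abs] using hlip

end Ray

lemma log_le_add_log_of_le_exp_mul {a b c : ℝ} (ha : 0 < a) (hb : 0 < b) (h : b ≤ exp c * a) :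
    log b ≤ c + log a :=
  (log_le_iff_le_exp hb).2 (by rwa [exp_add, exp_log ha])

lemma abs_log_one_add_sub_le {v r s : ℝ} (hv : 0 ≤ v) (hr : 0 ≤ r) (hs : 0 ≤ s)
    (hlow : exp (-v) * r - v ≤ s) (hup : s ≤ exp v * r + v) :
    |log (1 + s) - log (1 + r)| ≤ 2 * v := by
  have hexp : 1 + v ≤ exp v := by linarith [add_one_le_exp v]
  have hs_up : 1 + s ≤ exp v * (1 + r) := by nlinarith
  have hr_up : 1 + r ≤ exp (2 * v) * (1 + s) :=
    calc 1 + r = 1 + exp v * (exp (-v) * r) := by rw [← mul_assoc, ← exp_add, add_neg_cancel,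
          exp_zero, one_mul]
      _ ≤ exp v + exp v * (s + v) := by gcongr; exacts [one_le_exp hv, by linarith]
      _ = exp v * (1 + v + s) := by ring
      _ ≤ exp v * (exp v * (1 + s)) := by gcongr; nlinarith [one_le_exp hv]
      _ = exp (2 * v) * (1 + s) := by rw [two_mul, exp_add]; ring
  have h₁ := log_le_add_log_of_le_exp_mul (by linarith) (by linarith) hs_up
  have h₂ := log_le_add_log_of_le_exp_mul (by linarith) (by linarith) hr_up
  exact abs_sub_le_iff.2 ⟨by linarith, by linarith⟩

lemma exp_neg_mul_le_and_le_exp_mul_of_abs_log_sub_le {a b c : ℝ} (ha : 0 < a) (hb : 0 < b)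
    (h : |log b - log a| ≤ c) : exp (-c) * a ≤ b ∧ b ≤ exp c * a := by
  obtain ⟨h₁, h₂⟩ := abs_sub_le_iff.1 h
  constructor
  · calc exp (-c) * a = exp (-c + log a) := by rw [exp_add, exp_log ha]
      _ ≤ exp (log b) := exp_le_exp.2 (by linarith)
      _ = b := exp_log hb
  · calc b = exp (log b) := (exp_log hb).symm
      _ ≤ exp (c + log a) := exp_le_exp.2 (by linarith)
      _ = exp c * a := by rw [exp_add, exp_log ha]

theorem radial_density_comparison
    (d : ℕ) (hd : 1 ≤ d) (C₀ : ℝ) (hC₀ : 0 < C₀)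
    (g : Euc d → ℝ)
    (hg_pos : ∀ x, 0 < g x)
    (hg_smooth : ContDiff ℝ 1 g)
    (hg_rot : ∀ x y : Euc d, ‖x‖ = ‖y‖ → g x = g y)
    (hg_grad : ∀ x : Euc d, ‖gradient g x‖ ≤ C₀ * g x / (1 + ‖x‖)) :
    ∀ V > (0 : ℝ), ∃ C > (0 : ℝ), ∀ v ∈ Set.Icc (0 : ℝ) V, ∀ x y : Euc d,
      Real.exp (-v) * ‖x‖ - v ≤ ‖y‖ → ‖y‖ ≤ Real.exp v * ‖x‖ + v →
      Real.exp (-(C * v)) * g x ≤ g y ∧ g y ≤ Real.exp (C * v) * g x := by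
  intro V _
  let e : Euc d := EuclideanSpace.single ⟨0, hd⟩ 1
  have he : ‖e‖ = 1 := by simp [e]
  have hg_ray : ∀ x, g x = g (‖x‖ • e) := fun x => hg_rot _ _ (by simp [norm_smul, he])
  have hbound : ∀ x, ‖fderiv ℝ g x‖ ≤ C₀ * g x / (1 + ‖x‖) := fun x => by
    rw [← toDual_gradient, LinearIsometryEquiv.norm_map]
    exact hg_grad x
  refine ⟨2 * C₀, by positivity, fun v ⟨hv, _⟩ x y hlow hup => ?_⟩
  apply exp_neg_mul_le_and_le_exp_mul_of_abs_log_sub_le (hg_pos x) (hg_pos y)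
  rw [hg_ray x, hg_ray y]
  calc _ ≤ C₀ * |log (1 + ‖y‖) - log (1 + ‖x‖)| :=
        abs_log_apply_smul_sub_le (hg_smooth.differentiable one_ne_zero) hg_pos hbound he
          (norm_nonneg x) (norm_nonneg y)
    _ ≤ C₀ * (2 * v) := by
        gcongr
        exact abs_log_one_add_sub_le hv (norm_nonneg x) (norm_nonneg y) hlow hup
    _ = 2 * C₀ * v := by ring
end
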